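/- The finite objects of the category iC_bif of bifinite Chu spaces (equivalently, the strongly finite objects of iC: finite objects of iC whose object and attribute sets are finite with the attribute set non-empty) have the amalgamation property: given strongly finite C, C₁, C₂ and monics φ₁ : C → C₁, φ₂ : C → C₂, there exist a strongly finite C' and monics ρ₁ : C₁ → C', ρ₂ : C₂ → C' with ρ₁ ∘ φ₁ = ρ₂ ∘ φ₂. Concretely, with A = A₁ ∩ A₂, one may take A' = A₁ ∪ A₂ and X' = {(x₁,x₂) ∈ X₁ × X₂ : φ₁⁻(x₁) = φ₂⁻(x₂)} with r'(a,(x₁,x₂)) = r₁(a,x₁) for a ∈ A₁ and r₂(a,x₂) for a ∈ A₂, and this C' is extensional. -/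

import Mathlib

/-!
The amalgam is the pushout of `φ₁` and `φ₂` in Chu spaces: its rows `A₁ ∪ A₂` are well defined
on `A₁ ∩ A₂` by the morphism equations, and its columns are the pairs of columns over a common
column of `C`. It is extensional because `C₁` and `C₂` are: finite objects of `iC` are
extensional.
-/

universe u

/-- A Chu space over `S`: objects `A`, attributes `X`, satisfaction `r`. -/
structure ChuSpace (S : Type u) : Type (u+1) where
  A : Type u
  X : Type u
  r : A → X → S

/-- A Chu morphism `(f, g)`. -/
@[ext]
structure ChuHom {S : Type u} (C D : ChuSpace S) : Type u where
  f : C.A → D.A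
  g : D.X → C.X
  comm : ∀ a y, D.r (f a) y = C.r a (g y)

variable {S : Type u}

/-- Composition of Chu morphisms: `ψ.comp φ = ψ ∘ φ`. -/
def ChuHom.comp {C D E : ChuSpace S} (ψ : ChuHom D E) (φ : ChuHom C D) : ChuHom C E where
  f := ψ.f ∘ φ.f
  g := φ.g ∘ ψ.g
  comm := fun a y => by
    simp only [Function.comp_apply]
    rw [ψ.comm, φ.comm]

def ChuHom.idHom (C : ChuSpace S) : ChuHom C C := ⟨id, id, fun _ _ => rfl⟩

/-- `φ` is an isomorphism of Chu spaces. -/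
def ChuIso {C D : ChuSpace S} (φ : ChuHom C D) : Prop :=
  ∃ ψ : ChuHom D C, φ.comp ψ = ChuHom.idHom D ∧ ψ.comp φ = ChuHom.idHom C

/-- No repeated columns. -/
def ChuExtensional (C : ChuSpace S) : Prop :=
  ∀ x y : C.X, (∀ a, C.r a x = C.r a y) → x = y

/-- No repeated rows. -/
def ChuSeparable (C : ChuSpace S) : Prop :=
  ∀ a b : C.A, (∀ x, C.r a x = C.r b x) → a = b

def ChuBiextensional (C : ChuSpace S) : Prop := ChuExtensional C ∧ ChuSeparable C

/-- Discrete: every function `A → S` is realized by a column. -/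
def ChuDiscrete (C : ChuSpace S) : Prop :=
  ∀ f : C.A → S, ∃ x : C.X, ∀ a, C.r a x = f a

/-- `φ` is monic in the full subcategory of Chu spaces satisfying `Obj`. -/
def MonicIn (Obj : ChuSpace S → Prop) {C D : ChuSpace S} (φ : ChuHom C D) : Prop :=
  ∀ (E : ChuSpace S), Obj E → ∀ ψ₁ ψ₂ : ChuHom E C,
    φ.comp ψ₁ = φ.comp ψ₂ → ψ₁ = ψ₂

/-- Monics of the category `C` of Chu spaces: injective forward, surjective backward. -/
def IsMonoC {C D : ChuSpace S} (φ : ChuHom C D) : Prop :=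
  Function.Injective φ.f ∧ Function.Surjective φ.g

/-- Monics of the categories `E` and `B`: injective forward component. -/
def IsMonoE {C D : ChuSpace S} (φ : ChuHom C D) : Prop :=
  Function.Injective φ.f

/-- An ω-sequence of Chu spaces. -/
structure ChuSeq (S : Type u) : Type (u+1) where
  C : ℕ → ChuSpace S
  φ : ∀ i, ChuHom (C i) (C (i+1))

/-- A cocone from the ω-sequence `T` to `C`. -/
structure Cocone (T : ChuSeq S) (C : ChuSpace S) : Type u where
  ψ : ∀ i, ChuHom (T.C i) C
  compat : ∀ i, (ψ (i+1)).comp (T.φ i) = ψ i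

/-- `c` is a colimit of `T` in the subcategory with objects `Obj` and morphisms `Mor`. -/
structure IsColimit (Obj : ChuSpace S → Prop)
    (Mor : ∀ C D : ChuSpace S, ChuHom C D → Prop)
    (T : ChuSeq S) (C : ChuSpace S) (c : Cocone T C) : Prop where
  obj : Obj C
  mor : ∀ i, Mor _ _ (c.ψ i)
  univ : ∀ (C' : ChuSpace S), Obj C' → ∀ (c' : Cocone T C'), (∀ i, Mor _ _ (c'.ψ i)) →
      ∃! μ : ChuHom C C', Mor _ _ μ ∧ ∀ i, μ.comp (c.ψ i) = c'.ψ i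

/-- A finite object in the subcategory `(Obj, Mor)`: every morphism into a colimit of an
ω-sequence factors through some stage. -/
def FiniteObjIn (Obj : ChuSpace S → Prop) (Mor : ∀ C D : ChuSpace S, ChuHom C D → Prop)
    (F : ChuSpace S) : Prop :=
  Obj F ∧ ∀ (T : ChuSeq S), (∀ i, Obj (T.C i)) → (∀ i, Mor _ _ (T.φ i)) →
    ∀ (C : ChuSpace S) (c : Cocone T C), IsColimit Obj Mor T C c →
      ∀ φ : ChuHom F C, Mor _ _ φ →
        ∃ (i : ℕ) (ψ : ChuHom F (T.C i)), Mor _ _ ψ ∧ (c.ψ i).comp ψ = φ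

/-- Strongly finite: a finite object of `iC` with finite object set,
finite and non-empty attribute set. -/
def StronglyFinite (F : ChuSpace S) : Prop :=
  FiniteObjIn (fun _ => True) (fun _ _ φ => IsMonoC φ) F ∧
    Finite F.A ∧ Finite F.X ∧ Nonempty F.X


namespace ChuHom

variable {C D E G : ChuSpace S}

theorem comp_assoc (χ : ChuHom E G) (ψ : ChuHom D E) (φ : ChuHom C D) :
    (χ.comp ψ).comp φ = χ.comp (ψ.comp φ) := rfl

end ChuHom

namespace IsMonoC

variable {C D E : ChuSpace S} {ψ : ChuHom D E} {φ : ChuHom C D}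

theorem comp (hψ : IsMonoC ψ) (hφ : IsMonoC φ) : IsMonoC (ψ.comp φ) :=
  ⟨hψ.1.comp hφ.1, hφ.2.comp hψ.2⟩

theorem of_comp (h : IsMonoC (ψ.comp φ)) : IsMonoC φ :=
  ⟨Function.Injective.of_comp (f := ψ.f) h.1, Function.Surjective.of_comp (g := ψ.g) h.2⟩

theorem cancel_left (hψ : IsMonoC ψ) {φ' : ChuHom C D} (h : ψ.comp φ = ψ.comp φ') : φ = φ' :=
  ChuHom.ext (hψ.1.comp_left (congrArg ChuHom.f h))
    (hψ.2.injective_comp_right (congrArg ChuHom.g h))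

end IsMonoC

theorem ChuExtensional.g_eq_of_forall_r_eq {D E : ChuSpace S} (hD : ChuExtensional D)
    (ψ : ChuHom D E) {y y' : E.X} (h : ∀ a, E.r a y = E.r a y') : ψ.g y = ψ.g y' :=
  hD _ _ fun a => by rw [← ψ.comm, ← ψ.comm, h]

theorem Cocone.exists_factor_of_le {T : ChuSeq S} {C D : ChuSpace S} (c : Cocone T C)
    {φ : ChuHom D C} {i j : ℕ} (hij : i ≤ j) (h : ∃ ψ : ChuHom D (T.C i), (c.ψ i).comp ψ = φ) :
    ∃ ψ : ChuHom D (T.C j), (c.ψ j).comp ψ = φ := by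
  induction j, hij using Nat.le_induction with
  | base => exact h
  | succ j _ ih =>
    obtain ⟨ψ, hfac⟩ := ih
    exact ⟨(T.φ j).comp ψ, by rw [← ChuHom.comp_assoc, c.compat, hfac]⟩

def truncAt (n : ℕ) (q : ℕ × Bool) : ℕ × Bool := if n ≤ q.1 then (q.1, true) else q

section truncAt

variable {n m : ℕ} {q q' : ℕ × Bool}

@[simp]
theorem truncAt_fst : (truncAt n q).1 = q.1 := by
  unfold truncAt; split_ifs <;> rfl

theorem truncAt_of_lt (h : q.1 < n) : truncAt n q = q := if_neg (by omega)

theorem truncAt_truncAt : truncAt m (truncAt n q) = truncAt (min m n) q := by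
  unfold truncAt; split_ifs <;> simp_all; omega

theorem truncAt_idem : truncAt n (truncAt n q) = truncAt n q := by
  rw [truncAt_truncAt, min_self]

theorem eq_of_forall_truncAt_eq (h : ∀ n, truncAt n q = truncAt n q') : q = q' := by
  have := h (q.1 + q'.1 + 1)
  rwa [truncAt_of_lt (by omega), truncAt_of_lt (by omega)] at this

end truncAt

/-- The limit of a compatible sequence: its entry at a stage past its (constant) level. -/
def truncLim (s : ℕ → ℕ × Bool) : ℕ × Bool := s ((s 0).1 + 1)

theorem truncAt_truncLim {s : ℕ → ℕ × Bool} (hs : ∀ n, truncAt n (s (n + 1)) = s n) (n : ℕ) :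
    truncAt n (truncLim s) = s n := by
  have hle : ∀ n m, n ≤ m → truncAt n (s m) = s n := by
    intro n m hm
    induction m, hm using Nat.le_induction with
    | base => rw [← hs n, truncAt_idem]
    | succ m hnm ih => rw [← ih, ← hs m, truncAt_truncAt, min_eq_left hnm]
  have hfst : ∀ m, (s m).1 = (s 0).1 := fun m => by
    rw [← hle 0 m (Nat.zero_le m), truncAt_fst]
  have hM : truncLim s = s (max n ((s 0).1 + 1)) := by
    rw [truncLim, ← hle _ _ (le_max_right n _), truncAt_of_lt (by rw [hfst]; omega)]
  rw [hM, hle _ _ (le_max_left _ _)]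

namespace ChuSpace

variable (F : ChuSpace S)

/-- Stage `n` keeps the columns of `F`, tagged by `ℕ × Bool` with the tags `(j, false)` and
`(j, true)` identified for `j ≥ n`; no stage separates all tags, but the colimit does. -/
def truncChain : ChuSeq S where
  C n := ⟨F.A, F.X × ULift.{u} {q : ℕ × Bool // truncAt n q = q}, fun a t => F.r a t.1⟩
  φ n := ⟨id, fun t => (t.1, ⟨⟨truncAt n t.2.down.1, truncAt_idem⟩⟩), fun _ _ => rfl⟩

def truncColim : ChuSpace S := ⟨F.A, F.X × ULift.{u} (ℕ × Bool), fun a t => F.r a t.1⟩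

def truncCocone : Cocone F.truncChain F.truncColim where
  ψ n := ⟨id, fun t => (t.1, ⟨⟨truncAt n t.2.down, truncAt_idem⟩⟩), fun _ _ => rfl⟩
  compat n := ChuHom.ext rfl <| funext fun t =>
    Prod.ext rfl <| congrArg ULift.up <| Subtype.ext <|
      truncAt_truncAt.trans (by rw [min_eq_left (Nat.le_succ n)])

theorem truncChain_isMonoC (n : ℕ) : IsMonoC (F.truncChain.φ n) := by
  refine ⟨Function.injective_id, fun t => ⟨(t.1, ⟨⟨t.2.down.1, ?_⟩⟩), ?_⟩⟩
  · rw [← t.2.down.2, truncAt_truncAt, Nat.min_eq_right (Nat.le_succ n)]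
  · exact Prod.ext rfl (congrArg ULift.up (Subtype.ext t.2.down.2))

theorem truncCocone_isMonoC (n : ℕ) : IsMonoC (F.truncCocone.ψ n) :=
  ⟨Function.injective_id, fun t => ⟨(t.1, ⟨t.2.down.1⟩),
    Prod.ext rfl (congrArg ULift.up (Subtype.ext t.2.down.2))⟩⟩

variable {F}

theorem truncCocone_hom_ext {D : ChuSpace S} {μ μ' : ChuHom F.truncColim D}
    (h : ∀ n, μ.comp (F.truncCocone.ψ n) = μ'.comp (F.truncCocone.ψ n)) : μ = μ' := by
  have hf := congrArg ChuHom.f (h 0)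
  refine ChuHom.ext hf (funext fun y => ?_)
  have hg : ∀ n, (F.truncCocone.ψ n).g (μ.g y) = (F.truncCocone.ψ n).g (μ'.g y) :=
    fun n => congrFun (congrArg ChuHom.g (h n)) y
  have hx := congrArg Prod.fst (hg 0)
  refine Prod.ext hx (congrArg ULift.up (eq_of_forall_truncAt_eq fun n => ?_))
  exact congrArg (fun t => t.2.down.1) (hg n)

section lift

variable {C' : ChuSpace S} (c' : Cocone F.truncChain C')

theorem _root_.Cocone.truncChain_g_succ (n : ℕ) (y : C'.X) :
    (F.truncChain.φ n).g ((c'.ψ (n + 1)).g y) = (c'.ψ n).g y :=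
  congrFun (congrArg ChuHom.g (c'.compat n)) y

theorem _root_.Cocone.truncChain_g_fst (n : ℕ) (y : C'.X) :
    ((c'.ψ n).g y).1 = ((c'.ψ 0).g y).1 := by
  induction n with
  | zero => rfl
  | succ n ih => rw [← ih, ← c'.truncChain_g_succ n y]; rfl

theorem _root_.Cocone.truncChain_f (n : ℕ) : (c'.ψ n).f = (c'.ψ 0).f := by
  induction n with
  | zero => rfl
  | succ n ih => rw [← ih, ← c'.compat n]; rfl

def truncLift : ChuHom F.truncColim C' where
  f := (c'.ψ 0).f
  g y := (((c'.ψ 0).g y).1, ⟨truncLim fun n => ((c'.ψ n).g y).2.down.1⟩)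
  comm := (c'.ψ 0).comm

theorem truncLift_comp (n : ℕ) : (truncLift c').comp (F.truncCocone.ψ n) = c'.ψ n := by
  refine ChuHom.ext (c'.truncChain_f n).symm (funext fun y => Prod.ext ?_ ?_)
  · exact (c'.truncChain_g_fst n y).symm
  · refine congrArg ULift.up (Subtype.ext (truncAt_truncLim (fun m => ?_) n))
    exact congrArg (fun t => t.2.down.1) (c'.truncChain_g_succ m y)

theorem truncLift_isMonoC (hc' : ∀ n, IsMonoC (c'.ψ n)) : IsMonoC (truncLift c') := by
  refine ⟨(hc' 0).1, fun t => ?_⟩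
  obtain ⟨y, hy⟩ := (hc' (t.2.down.1 + 1)).2 (t.1, ⟨⟨t.2.down, truncAt_of_lt (by omega)⟩⟩)
  have hfac := (congrFun (congrArg ChuHom.g (truncLift_comp c' (t.2.down.1 + 1))) y).trans hy
  have hq : truncAt (t.2.down.1 + 1) ((truncLift c').g y).2.down = t.2.down :=
    congrArg (fun s => s.2.down.1) hfac
  have hlt : ((truncLift c').g y).2.down.1 < t.2.down.1 + 1 := by
    rw [← truncAt_fst (n := t.2.down.1 + 1), hq]
    omega
  have hx := congrArg Prod.fst hfac
  exact ⟨y, Prod.ext hx (congrArg ULift.up ((truncAt_of_lt hlt).symm.trans hq))⟩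

end lift

variable (F)

theorem truncCocone_isColimit :
    IsColimit (fun _ => True) (fun _ _ φ => IsMonoC φ) F.truncChain F.truncColim
      F.truncCocone where
  obj := trivial
  mor := F.truncCocone_isMonoC
  univ _ _ c' hc' := ⟨truncLift c', ⟨truncLift_isMonoC c' hc', truncLift_comp c'⟩,
    fun _ hμ => truncCocone_hom_ext fun n => (hμ.2 n).trans (truncLift_comp c' n).symm⟩

end ChuSpace

open ChuSpace in
/-- Send the columns `(x, j, false)` of the colimit to `x'`: since `x` and `x'` have the same
rows this is a monic, and it factors through a stage only if `x = x'`. -/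
theorem ChuExtensional.of_finiteObjIn {F : ChuSpace S}
    (hF : FiniteObjIn (fun _ => True) (fun _ _ φ => IsMonoC φ) F) : ChuExtensional F := by
  classical
  intro x x' hxx
  let φ : ChuHom F F.truncColim :=
    ⟨id, fun t => if t.1 = x ∧ t.2.down.2 = false then x' else t.1, fun a t => by
      show F.r a t.1 = F.r a (if _ then x' else t.1)
      split_ifs with h
      · rw [h.1, hxx]
      · rfl⟩
  have hφ : IsMonoC φ := ⟨Function.injective_id, fun x₀ => ⟨(x₀, ⟨(0, true)⟩), by simp [φ]⟩⟩
  obtain ⟨i, ψ, -, hψ⟩ := hF.2 F.truncChain (fun _ => trivial) F.truncChain_isMonoC _ _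
    F.truncCocone_isColimit φ hφ
  have hfac : ∀ t, ψ.g ((F.truncCocone.ψ i).g t) = φ.g t := congrFun (congrArg ChuHom.g hψ)
  have hglue :
      (F.truncCocone.ψ i).g (x, ⟨(i, true)⟩) = (F.truncCocone.ψ i).g (x, ⟨(i, false)⟩) :=
    Prod.ext rfl (congrArg ULift.up (Subtype.ext (by simp [truncAt])))
  simpa [φ] using (hfac _).symm.trans ((congrArg ψ.g hglue).trans (hfac _))

section Amalgamation

variable {α : Type u} {A₁ A₂ : Set α} {X X₁ X₂ : Type u}
  {r : ↥(A₁ ∩ A₂) → X → S} {r₁ : ↥A₁ → X₁ → S} {r₂ : ↥A₂ → X₂ → S}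
  (φ₁ : ChuHom (⟨↥(A₁ ∩ A₂), X, r⟩ : ChuSpace S) (⟨↥A₁, X₁, r₁⟩ : ChuSpace S))
  (φ₂ : ChuHom (⟨↥(A₁ ∩ A₂), X, r⟩ : ChuSpace S) (⟨↥A₂, X₂, r₂⟩ : ChuSpace S))

open Classical in
noncomputable def amalgamRel (a : ↥(A₁ ∪ A₂)) (p : {p : X₁ × X₂ // φ₁.g p.1 = φ₂.g p.2}) : S :=
  if h : (a : α) ∈ A₁ then r₁ ⟨a, h⟩ p.1.1 else r₂ ⟨a, a.2.resolve_left h⟩ p.1.2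

noncomputable def amalgam : ChuSpace S :=
  ⟨↥(A₁ ∪ A₂), {p : X₁ × X₂ // φ₁.g p.1 = φ₂.g p.2}, amalgamRel φ₁ φ₂⟩

variable {φ₁ φ₂}

theorem r₁_eq_r₂_of_mem_inter (hf₁ : ∀ a, (φ₁.f a : α) = (a : α))
    (hf₂ : ∀ a, (φ₂.f a : α) = (a : α)) {a : α} (h₁ : a ∈ A₁) (h₂ : a ∈ A₂)
    (p : {p : X₁ × X₂ // φ₁.g p.1 = φ₂.g p.2}) : r₁ ⟨a, h₁⟩ p.1.1 = r₂ ⟨a, h₂⟩ p.1.2 := by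
  have e₁ := φ₁.comm ⟨a, h₁, h₂⟩ p.1.1
  have e₂ := φ₂.comm ⟨a, h₁, h₂⟩ p.1.2
  rw [show φ₁.f ⟨a, h₁, h₂⟩ = ⟨a, h₁⟩ from Subtype.ext (hf₁ _)] at e₁
  rw [show φ₂.f ⟨a, h₁, h₂⟩ = ⟨a, h₂⟩ from Subtype.ext (hf₂ _)] at e₂
  exact e₁.trans ((congrArg (r ⟨a, h₁, h₂⟩) p.2).trans e₂.symm)

theorem amalgamRel_of_mem_left {a : α} (h : a ∈ A₁) (p : {p : X₁ × X₂ // φ₁.g p.1 = φ₂.g p.2}) :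
    amalgamRel φ₁ φ₂ ⟨a, Set.subset_union_left h⟩ p = r₁ ⟨a, h⟩ p.1.1 :=
  dif_pos h

theorem amalgamRel_of_mem_right (hf₁ : ∀ a, (φ₁.f a : α) = (a : α))
    (hf₂ : ∀ a, (φ₂.f a : α) = (a : α)) {a : α} (h : a ∈ A₂)
    (p : {p : X₁ × X₂ // φ₁.g p.1 = φ₂.g p.2}) :
    amalgamRel φ₁ φ₂ ⟨a, Set.subset_union_right h⟩ p = r₂ ⟨a, h⟩ p.1.2 := by
  by_cases h₁ : a ∈ A₁
  · exact (dif_pos h₁).trans (r₁_eq_r₂_of_mem_inter hf₁ hf₂ h₁ h p)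
  · exact dif_neg h₁

namespace amalgam

variable (φ₁ φ₂)

noncomputable def inl : ChuHom (⟨↥A₁, X₁, r₁⟩ : ChuSpace S) (amalgam φ₁ φ₂) :=
  ⟨fun a => ⟨a, Or.inl a.2⟩, fun p => p.1.1, fun a => amalgamRel_of_mem_left a.2⟩

variable {φ₁ φ₂}

noncomputable def inr (hf₁ : ∀ a, (φ₁.f a : α) = (a : α)) (hf₂ : ∀ a, (φ₂.f a : α) = (a : α)) :
    ChuHom (⟨↥A₂, X₂, r₂⟩ : ChuSpace S) (amalgam φ₁ φ₂) :=
  ⟨fun a => ⟨a, Or.inr a.2⟩, fun p => p.1.2, fun a => amalgamRel_of_mem_right hf₁ hf₂ a.2⟩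

theorem isMonoC_inl (hφ₂ : Function.Surjective φ₂.g) : IsMonoC (inl φ₁ φ₂) := by
  refine ⟨fun _ _ h => Subtype.ext (congrArg Subtype.val h :), fun x₁ => ?_⟩
  obtain ⟨x₂, hx₂⟩ := hφ₂ (φ₁.g x₁)
  exact ⟨⟨(x₁, x₂), hx₂.symm⟩, rfl⟩

theorem isMonoC_inr (hf₁ : ∀ a, (φ₁.f a : α) = (a : α)) (hf₂ : ∀ a, (φ₂.f a : α) = (a : α))
    (hφ₁ : Function.Surjective φ₁.g) : IsMonoC (inr hf₁ hf₂) := by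
  refine ⟨fun _ _ h => Subtype.ext (congrArg Subtype.val h :), fun x₂ => ?_⟩
  obtain ⟨x₁, hx₁⟩ := hφ₁ (φ₂.g x₂)
  exact ⟨⟨(x₁, x₂), hx₁⟩, rfl⟩

theorem inl_comp_eq_inr_comp (hf₁ : ∀ a, (φ₁.f a : α) = (a : α))
    (hf₂ : ∀ a, (φ₂.f a : α) = (a : α)) : (inl φ₁ φ₂).comp φ₁ = (inr hf₁ hf₂).comp φ₂ :=
  ChuHom.ext (funext fun c => Subtype.ext ((hf₁ c).trans (hf₂ c).symm)) (funext fun p => p.2)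

theorem hom_ext (hf₁ : ∀ a, (φ₁.f a : α) = (a : α)) (hf₂ : ∀ a, (φ₂.f a : α) = (a : α))
    {D : ChuSpace S} {ψ ψ' : ChuHom (amalgam φ₁ φ₂) D}
    (h₁ : ψ.comp (inl φ₁ φ₂) = ψ'.comp (inl φ₁ φ₂))
    (h₂ : ψ.comp (inr hf₁ hf₂) = ψ'.comp (inr hf₁ hf₂)) : ψ = ψ' := by
  refine ChuHom.ext (funext fun a => ?_) (funext fun y => Subtype.ext (Prod.ext ?_ ?_))
  · rcases a with ⟨a, ha₁ | ha₂⟩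
    · exact congrFun (congrArg ChuHom.f h₁) ⟨a, ha₁⟩
    · exact congrFun (congrArg ChuHom.f h₂) ⟨a, ha₂⟩
  · exact congrFun (congrArg ChuHom.g h₁) y
  · exact congrFun (congrArg ChuHom.g h₂) y

section desc

variable {D : ChuSpace S} (χ₁ : ChuHom (⟨↥A₁, X₁, r₁⟩ : ChuSpace S) D)
  (χ₂ : ChuHom (⟨↥A₂, X₂, r₂⟩ : ChuSpace S) D)

open Classical in
noncomputable def desc (h : χ₁.comp φ₁ = χ₂.comp φ₂) : ChuHom (amalgam φ₁ φ₂) D where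
  f := fun (a : ↥(A₁ ∪ A₂)) =>
    if h : (a : α) ∈ A₁ then χ₁.f ⟨a, h⟩ else χ₂.f ⟨a, a.2.resolve_left h⟩
  g y := ⟨(χ₁.g y, χ₂.g y), congrFun (congrArg ChuHom.g h) y⟩
  comm a y := by
    show D.r _ y = amalgamRel φ₁ φ₂ a _
    unfold amalgamRel
    split_ifs
    · exact χ₁.comm _ y
    · exact χ₂.comm _ y

theorem desc_comp_inl (h : χ₁.comp φ₁ = χ₂.comp φ₂) : (desc χ₁ χ₂ h).comp (inl φ₁ φ₂) = χ₁ :=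
  ChuHom.ext (funext fun (a : ↥A₁) => dif_pos a.2) rfl

theorem desc_comp_inr (hf₁ : ∀ a, (φ₁.f a : α) = (a : α)) (hf₂ : ∀ a, (φ₂.f a : α) = (a : α))
    (h : χ₁.comp φ₁ = χ₂.comp φ₂) : (desc χ₁ χ₂ h).comp (inr hf₁ hf₂) = χ₂ := by
  refine ChuHom.ext (funext fun a => ?_) rfl
  by_cases ha : (a : α) ∈ A₁
  · have hc : χ₁.f (φ₁.f ⟨a, ha, a.2⟩) = χ₂.f (φ₂.f ⟨a, ha, a.2⟩) :=
      congrFun (congrArg ChuHom.f h) ⟨a, ha, a.2⟩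
    rw [show φ₁.f ⟨a, ha, a.2⟩ = ⟨a, ha⟩ from Subtype.ext (hf₁ _),
      show φ₂.f ⟨a, ha, a.2⟩ = a from Subtype.ext (hf₂ _)] at hc
    exact (dif_pos ha).trans hc
  · exact dif_neg ha

end desc

theorem extensional (hf₁ : ∀ a, (φ₁.f a : α) = (a : α)) (hf₂ : ∀ a, (φ₂.f a : α) = (a : α))
    (h₁ : ChuExtensional (⟨↥A₁, X₁, r₁⟩ : ChuSpace S))
    (h₂ : ChuExtensional (⟨↥A₂, X₂, r₂⟩ : ChuSpace S)) : ChuExtensional (amalgam φ₁ φ₂) :=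
  fun _ _ hpq => Subtype.ext (Prod.ext (h₁.g_eq_of_forall_r_eq (inl φ₁ φ₂) hpq)
    (h₂.g_eq_of_forall_r_eq (inr hf₁ hf₂) hpq))

/-- A monic from the amalgam into a colimit restricts along `inl` and `inr` to monics that factor
through a common stage; the factorizations agree on `C` because the colimit legs are monic, so
they glue to a factorization of the original map. -/
theorem finiteObjIn (hf₁ : ∀ a, (φ₁.f a : α) = (a : α)) (hf₂ : ∀ a, (φ₂.f a : α) = (a : α))
    (hφ₁ : Function.Surjective φ₁.g) (hφ₂ : Function.Surjective φ₂.g)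
    (h₁ : FiniteObjIn (fun _ => True) (fun _ _ φ => IsMonoC φ) (⟨↥A₁, X₁, r₁⟩ : ChuSpace S))
    (h₂ : FiniteObjIn (fun _ => True) (fun _ _ φ => IsMonoC φ) (⟨↥A₂, X₂, r₂⟩ : ChuSpace S)) :
    FiniteObjIn (fun _ => True) (fun _ _ φ => IsMonoC φ) (amalgam φ₁ φ₂) := by
  refine ⟨trivial, fun T hTobj hT C c hc φ hφ => ?_⟩
  obtain ⟨i₁, χ₁, -, hfac₁⟩ := h₁.2 T hTobj hT C c hc _ (hφ.comp (isMonoC_inl hφ₂))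
  obtain ⟨i₂, χ₂, -, hfac₂⟩ := h₂.2 T hTobj hT C c hc _ (hφ.comp (isMonoC_inr hf₁ hf₂ hφ₁))
  obtain ⟨χ₁, hfac₁⟩ := c.exists_factor_of_le (le_max_left i₁ i₂) ⟨χ₁, hfac₁⟩
  obtain ⟨χ₂, hfac₂⟩ := c.exists_factor_of_le (le_max_right i₁ i₂) ⟨χ₂, hfac₂⟩
  have hχ : χ₁.comp φ₁ = χ₂.comp φ₂ := (hc.mor _).cancel_left <| by
    rw [← ChuHom.comp_assoc, ← ChuHom.comp_assoc, hfac₁, hfac₂, ChuHom.comp_assoc,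
      ChuHom.comp_assoc, inl_comp_eq_inr_comp hf₁ hf₂]
  have hdesc : (c.ψ _).comp (desc χ₁ χ₂ hχ) = φ := hom_ext hf₁ hf₂
    (by rw [ChuHom.comp_assoc, desc_comp_inl, hfac₁])
    (by rw [ChuHom.comp_assoc, desc_comp_inr, hfac₂])
  exact ⟨_, desc χ₁ χ₂ hχ, (hdesc ▸ hφ).of_comp, hdesc⟩

theorem stronglyFinite (hf₁ : ∀ a, (φ₁.f a : α) = (a : α)) (hf₂ : ∀ a, (φ₂.f a : α) = (a : α))
    (hφ₁ : Function.Surjective φ₁.g) (hφ₂ : Function.Surjective φ₂.g)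
    (h₁ : StronglyFinite (⟨↥A₁, X₁, r₁⟩ : ChuSpace S))
    (h₂ : StronglyFinite (⟨↥A₂, X₂, r₂⟩ : ChuSpace S)) : StronglyFinite (amalgam φ₁ φ₂) := by
  obtain ⟨hF₁, _, _, _⟩ := h₁
  obtain ⟨hF₂, _, _, -⟩ := h₂
  exact ⟨finiteObjIn hf₁ hf₂ hφ₁ hφ₂ hF₁ hF₂, inferInstanceAs (Finite ↥(A₁ ∪ A₂)),
    Subtype.finite, (isMonoC_inl hφ₂).2.nonempty⟩

end amalgam

end Amalgamation

theorem stmt19_general {S α : Type u} (A₁ A₂ : Set α) (X X₁ X₂ : Type u)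
    (r : ↥(A₁ ∩ A₂) → X → S) (r₁ : ↥A₁ → X₁ → S) (r₂ : ↥A₂ → X₂ → S)
    (hC₁ : StronglyFinite (⟨↥A₁, X₁, r₁⟩ : ChuSpace S))
    (hC₂ : StronglyFinite (⟨↥A₂, X₂, r₂⟩ : ChuSpace S))
    (φ₁ : ChuHom (⟨↥(A₁ ∩ A₂), X, r⟩ : ChuSpace S) (⟨↥A₁, X₁, r₁⟩ : ChuSpace S))
    (φ₂ : ChuHom (⟨↥(A₁ ∩ A₂), X, r⟩ : ChuSpace S) (⟨↥A₂, X₂, r₂⟩ : ChuSpace S))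
    (hφ₁ : IsMonoC φ₁) (hφ₂ : IsMonoC φ₂)
    (hf₁ : ∀ a, (φ₁.f a : α) = (a : α)) (hf₂ : ∀ a, (φ₂.f a : α) = (a : α)) :
    ∃ r' : ↥(A₁ ∪ A₂) → {p : X₁ × X₂ // φ₁.g p.1 = φ₂.g p.2} → S,
      (∀ (a : α) (h : a ∈ A₁) (p : {p : X₁ × X₂ // φ₁.g p.1 = φ₂.g p.2}),
        r' ⟨a, Set.subset_union_left h⟩ p = r₁ ⟨a, h⟩ p.1.1) ∧
      (∀ (a : α) (h : a ∈ A₂) (p : {p : X₁ × X₂ // φ₁.g p.1 = φ₂.g p.2}),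
        r' ⟨a, Set.subset_union_right h⟩ p = r₂ ⟨a, h⟩ p.1.2) ∧
      StronglyFinite (⟨↥(A₁ ∪ A₂), {p : X₁ × X₂ // φ₁.g p.1 = φ₂.g p.2}, r'⟩ :
        ChuSpace S) ∧
      ChuExtensional (⟨↥(A₁ ∪ A₂), {p : X₁ × X₂ // φ₁.g p.1 = φ₂.g p.2}, r'⟩ :
        ChuSpace S) ∧
      ∃ (ρ₁ : ChuHom (⟨↥A₁, X₁, r₁⟩ : ChuSpace S)
            (⟨↥(A₁ ∪ A₂), {p : X₁ × X₂ // φ₁.g p.1 = φ₂.g p.2}, r'⟩ : ChuSpace S))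
        (ρ₂ : ChuHom (⟨↥A₂, X₂, r₂⟩ : ChuSpace S)
            (⟨↥(A₁ ∪ A₂), {p : X₁ × X₂ // φ₁.g p.1 = φ₂.g p.2}, r'⟩ : ChuSpace S)),
        IsMonoC ρ₁ ∧ IsMonoC ρ₂ ∧ ρ₁.comp φ₁ = ρ₂.comp φ₂ ∧
        (∀ a, (ρ₁.f a : α) = (a : α)) ∧ (∀ p, ρ₁.g p = p.1.1) ∧
        (∀ a, (ρ₂.f a : α) = (a : α)) ∧ (∀ p, ρ₂.g p = p.1.2) := by
  exact ⟨amalgamRel φ₁ φ₂, fun _ h p => amalgamRel_of_mem_left h p,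
    fun _ h p => amalgamRel_of_mem_right hf₁ hf₂ h p,
    amalgam.stronglyFinite hf₁ hf₂ hφ₁.2 hφ₂.2 hC₁ hC₂,
    amalgam.extensional hf₁ hf₂ (.of_finiteObjIn hC₁.1) (.of_finiteObjIn hC₂.1),
    amalgam.inl φ₁ φ₂, amalgam.inr hf₁ hf₂, amalgam.isMonoC_inl hφ₂.2,
    amalgam.isMonoC_inr hf₁ hf₂ hφ₁.2, amalgam.inl_comp_eq_inr_comp hf₁ hf₂,
    fun _ => rfl, fun _ => rfl, fun _ => rfl, fun _ => rfl⟩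

/-- Amalgamation for strongly finite objects of `iC`: given strongly finite
`C = (A₁ ∩ A₂, r, X)`, `C₁ = (A₁, r₁, X₁)`, `C₂ = (A₂, r₂, X₂)` and monics
`φ₁ : C → C₁`, `φ₂ : C → C₂` whose forward components are inclusions, the space
`C' = (A₁ ∪ A₂, r', X')` with `X' = {(x₁,x₂) : φ₁⁻ x₁ = φ₂⁻ x₂}` and `r'` restricting
to `r₁` on `A₁` and `r₂` on `A₂` is strongly finite and extensional, and the morphisms
`ρ₁ = (incl, pr₁)`, `ρ₂ = (incl, pr₂)` are monics with `ρ₁ ∘ φ₁ = ρ₂ ∘ φ₂`. -/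
theorem stmt19 {S α : Type u} (A₁ A₂ : Set α) (X X₁ X₂ : Type u)
    (r : ↥(A₁ ∩ A₂) → X → S) (r₁ : ↥A₁ → X₁ → S) (r₂ : ↥A₂ → X₂ → S)
    (hC : StronglyFinite (⟨↥(A₁ ∩ A₂), X, r⟩ : ChuSpace S))
    (hC₁ : StronglyFinite (⟨↥A₁, X₁, r₁⟩ : ChuSpace S))
    (hC₂ : StronglyFinite (⟨↥A₂, X₂, r₂⟩ : ChuSpace S))
    (φ₁ : ChuHom (⟨↥(A₁ ∩ A₂), X, r⟩ : ChuSpace S) (⟨↥A₁, X₁, r₁⟩ : ChuSpace S))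
    (φ₂ : ChuHom (⟨↥(A₁ ∩ A₂), X, r⟩ : ChuSpace S) (⟨↥A₂, X₂, r₂⟩ : ChuSpace S))
    (hφ₁ : IsMonoC φ₁) (hφ₂ : IsMonoC φ₂)
    (hf₁ : ∀ a, (φ₁.f a : α) = (a : α)) (hf₂ : ∀ a, (φ₂.f a : α) = (a : α)) :
    ∃ r' : ↥(A₁ ∪ A₂) → {p : X₁ × X₂ // φ₁.g p.1 = φ₂.g p.2} → S,
      (∀ (a : α) (h : a ∈ A₁) (p : {p : X₁ × X₂ // φ₁.g p.1 = φ₂.g p.2}),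
        r' ⟨a, Set.subset_union_left h⟩ p = r₁ ⟨a, h⟩ p.1.1) ∧
      (∀ (a : α) (h : a ∈ A₂) (p : {p : X₁ × X₂ // φ₁.g p.1 = φ₂.g p.2}),
        r' ⟨a, Set.subset_union_right h⟩ p = r₂ ⟨a, h⟩ p.1.2) ∧
      StronglyFinite (⟨↥(A₁ ∪ A₂), {p : X₁ × X₂ // φ₁.g p.1 = φ₂.g p.2}, r'⟩ :
        ChuSpace S) ∧
      ChuExtensional (⟨↥(A₁ ∪ A₂), {p : X₁ × X₂ // φ₁.g p.1 = φ₂.g p.2}, r'⟩ :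
        ChuSpace S) ∧
      ∃ (ρ₁ : ChuHom (⟨↥A₁, X₁, r₁⟩ : ChuSpace S)
            (⟨↥(A₁ ∪ A₂), {p : X₁ × X₂ // φ₁.g p.1 = φ₂.g p.2}, r'⟩ : ChuSpace S))
        (ρ₂ : ChuHom (⟨↥A₂, X₂, r₂⟩ : ChuSpace S)
            (⟨↥(A₁ ∪ A₂), {p : X₁ × X₂ // φ₁.g p.1 = φ₂.g p.2}, r'⟩ : ChuSpace S)),
        IsMonoC ρ₁ ∧ IsMonoC ρ₂ ∧ ρ₁.comp φ₁ = ρ₂.comp φ₂ ∧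
        (∀ a, (ρ₁.f a : α) = (a : α)) ∧ (∀ p, ρ₁.g p = p.1.1) ∧
        (∀ a, (ρ₂.f a : α) = (a : α)) ∧ (∀ p, ρ₂.g p = p.1.2) :=
  stmt19_general A₁ A₂ X X₁ X₂ r r₁ r₂ hC₁ hC₂ φ₁ φ₂ hφ₁ hφ₂ hf₁ hf₂
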